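/- arXiv:1506.01544 — 2 statements merged into one kernel-verified Lean document; each statement's English description precedes it below -/
import Mathlib

section
/- Let (P, Q) be a pair of natural numbers such that for every index i, bit (i+1) of P and bit i of Q are not both 1 (so that (P,Q) is non-contradictory), and suppose P is even with bit 0 of P equal to 0. Let m be the number of indices i such that bit (i+1) of P is 0 and bit i of Q is 1. Then the number of ordered pairs (X, Y) with CVT(X, Y) = P and XOR(X, Y) = Q is exactly 2^m. -/
/-!
Read a natural number as the finite set of its bit positions, so that `&&&` becomes `∩` and
`^^^` becomes `∆`. For disjoint `a` and `q`, the solutions of `x ∩ y = a`, `x ∆ y = q` are exactly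
`y = x ∆ q` with `a ⊆ x ⊆ a ∪ q`, and there are `2 ^ #q` such `x`. Here `a` is the set of bits of
`P / 2`, and every bit of `Q` is free.
-/

def CVT (X Y : ℕ) : ℕ := 2 * (X &&& Y)
def XOR (X Y : ℕ) : ℕ := X ^^^ Y

namespace Finset

theorem ncard_setOf_inter_eq_and_symmDiff_eq {α : Type*} [DecidableEq α] {a q : Finset α}
    (h : Disjoint a q) :
    {p : Finset α × Finset α | p.1 ∩ p.2 = a ∧ symmDiff p.1 p.2 = q}.ncard = 2 ^ #q := by
  have hsol : {p : Finset α × Finset α | p.1 ∩ p.2 = a ∧ symmDiff p.1 p.2 = q} =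
      ((Icc a (a ∪ q)).image fun s ↦ (s, symmDiff s q) : Finset _) := by
    ext ⟨s, t⟩
    rw [disjoint_left] at h
    simp only [Set.mem_ofPred_eq, coe_image, Set.mem_image, mem_coe, mem_Icc, Prod.mk.injEq]
    constructor
    · rintro ⟨rfl, rfl⟩
      refine ⟨s, ⟨inter_subset_left, fun x hx ↦ ?_⟩, rfl, symmDiff_symmDiff_cancel_left _ _⟩
      by_cases hxt : x ∈ t <;> simp [mem_symmDiff, hx, hxt]
    · rintro ⟨s, ⟨has, hsq⟩, rfl, rfl⟩
      refine ⟨?_, symmDiff_symmDiff_cancel_left _ _⟩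
      ext x
      have := @has x
      have := @hsq x
      have := @h x
      simp only [mem_inter, mem_symmDiff, mem_union] at *
      tauto
  rw [hsol, Set.ncard_coe_finset, card_image_of_injective _ fun _ _ h ↦ congrArg Prod.fst h,
    card_Icc_finset subset_union_left, card_union_of_disjoint h, Nat.add_sub_cancel_left]

@[simp] theorem mem_equivBitIndices {n i : ℕ} : i ∈ equivBitIndices n ↔ n.testBit i := by
  simp [equivBitIndices]

theorem equivBitIndices_land (m n : ℕ) :
    equivBitIndices (m &&& n) = equivBitIndices m ∩ equivBitIndices n := by
  ext i
  simp [Nat.testBit_and]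

theorem equivBitIndices_xor (m n : ℕ) :
    equivBitIndices (m ^^^ n) = symmDiff (equivBitIndices m) (equivBitIndices n) := by
  ext i
  cases hm : m.testBit i <;> cases hn : n.testBit i <;>
    simp [mem_symmDiff, Nat.testBit_xor, hm, hn]

end Finset

open Finset in
theorem Nat.ncard_setOf_land_eq_and_xor_eq {A Q : ℕ} (h : A &&& Q = 0) :
    {p : ℕ × ℕ | p.1 &&& p.2 = A ∧ p.1 ^^^ p.2 = Q}.ncard = 2 ^ {i | Q.testBit i}.ncard := by
  have hdisj : Disjoint (equivBitIndices A) (equivBitIndices Q) := by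
    rw [disjoint_iff_inter_eq_empty, ← equivBitIndices_land, h]
    rfl
  have hpre : {p : ℕ × ℕ | p.1 &&& p.2 = A ∧ p.1 ^^^ p.2 = Q} =
      Equiv.prodCongr equivBitIndices equivBitIndices ⁻¹'
        {p | p.1 ∩ p.2 = equivBitIndices A ∧ symmDiff p.1 p.2 = equivBitIndices Q} := by
    ext ⟨X, Y⟩
    simp only [Set.mem_preimage, Equiv.prodCongr_apply, Prod.map_fst, Prod.map_snd,
      Set.mem_ofPred_eq, ← equivBitIndices_land, ← equivBitIndices_xor, Equiv.apply_eq_iff_eq]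
  have hQ : {i | Q.testBit i} = (equivBitIndices Q : Set ℕ) := by
    ext
    simp
  rw [hpre, Set.ncard_preimage_of_injective_subset_range (Equiv.injective _) (by simp),
    ncard_setOf_inter_eq_and_symmDiff_eq hdisj, hQ, Set.ncard_coe_finset]

theorem num_children (P Q : ℕ)
    (hnc : ∀ i, ¬ (Nat.testBit P (i + 1) = true ∧ Nat.testBit Q i = true))
    (hP : Nat.testBit P 0 = false) :
    Set.ncard {p : ℕ × ℕ | CVT p.1 p.2 = P ∧ XOR p.1 p.2 = Q} =
      2 ^ Set.ncard {i : ℕ | Nat.testBit P (i + 1) = false ∧ Nat.testBit Q i = true} := by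
  have hP_even : P % 2 = 0 := Nat.mod_two_eq_zero_iff_testBit_zero.mpr hP
  have hdisj : P / 2 &&& Q = 0 := Nat.eq_of_testBit_eq fun i ↦ by
    simpa [Nat.testBit_and, Nat.testBit_div_two] using hnc i
  have hlhs : {p : ℕ × ℕ | CVT p.1 p.2 = P ∧ XOR p.1 p.2 = Q} =
      {p : ℕ × ℕ | p.1 &&& p.2 = P / 2 ∧ p.1 ^^^ p.2 = Q} := by
    ext p
    simp only [CVT, XOR, Set.mem_ofPred_eq]
    omega
  have hrhs : {i : ℕ | Nat.testBit P (i + 1) = false ∧ Nat.testBit Q i = true} =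
      {i | Q.testBit i} := by
    ext i
    exact ⟨And.right, fun hq ↦ ⟨Bool.eq_false_iff.mpr fun hp ↦ hnc i ⟨hp, hq⟩, hq⟩⟩
  rw [hlhs, hrhs, Nat.ncard_setOf_land_eq_and_xor_eq hdisj]
end

section
/- Let N = 2^k - 2 with k ≥ 2. Then for every pair (X, Y) with X + Y = N, the iterate (CVT(X,Y), XOR(X,Y)) either equals (0, N) or has CVT value satisfying CVT(CVT(X,Y), XOR(X,Y)) = 0 after one more step; i.e., every node of the CVT-XOR tree of N reaches the root in at most 2 steps (the tree has height at most 3 counting the (N,0) node). -/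
/-!
A CVT-XOR step preserves the sum, since `x + y = (x ^^^ y) + 2 * (x &&& y)` (half adder), and
after one step both coordinates are even. Halving them gives two numbers summing to
`2 ^ (k - 1) - 1`, which has all bits set; such an addition has no carries, so the two halves
are bitwise disjoint and the second step has `CVT = 0`, hence `XOR` equal to the whole sum.
-/

theorem Nat.xor_add_two_mul_and (x y : ℕ) : (x ^^^ y) + 2 * (x &&& y) = x + y := by
  induction x using Nat.binaryRec generalizing y with
  | zero => simp
  | bit a m ih =>
    cases y using Nat.bitCasesOn with
    | bit b n =>
      have := ih n
      rw [Nat.xor_bit, Nat.land_bit, Nat.bit_val, Nat.bit_val, Nat.bit_val, Nat.bit_val]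
      cases a <;> cases b <;>
        simp only [bne_self_eq_false, Bool.bne_true, Bool.bne_false, Bool.not_false, Bool.and_self,
          Bool.and_true, Bool.and_false, Bool.toNat_true, Bool.toNat_false, add_zero] <;>
        omega

theorem Nat.and_eq_zero_of_add_eq_two_pow_sub_one {a b m : ℕ} (h : a + b = 2 ^ m - 1) :
    a &&& b = 0 := by
  have ha : a < 2 ^ m := by have := Nat.two_pow_pos m; omega
  have hb : b = 2 ^ m - (a + 1) := by omega
  apply Nat.eq_of_testBit_eq
  intro i
  rw [hb, Nat.testBit_land, Nat.testBit_two_pow_sub_succ ha]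
  cases a.testBit i <;> simp

theorem Nat.two_mul_and_two_mul (a b : ℕ) : 2 * a &&& 2 * b = 2 * (a &&& b) := by
  simpa [Nat.shiftLeft_eq, mul_comm] using (Nat.shiftLeft_and_distrib (a := a) (b := b) (i := 1)).symm

theorem Nat.two_pow_sub_two_eq_two_mul (k : ℕ) : 2 ^ k - 2 = 2 * (2 ^ (k - 1) - 1) := by
  cases k with
  | zero => rfl
  | succ k => rw [pow_succ, Nat.add_sub_cancel]; omega

theorem CVT_add_XOR (X Y : ℕ) : CVT X Y + XOR X Y = X + Y := by
  rw [CVT, XOR, add_comm, Nat.xor_add_two_mul_and]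

theorem even_CVT (X Y : ℕ) : Even (CVT X Y) := even_two_mul _

theorem even_XOR {X Y : ℕ} (h : Even (X + Y)) : Even (XOR X Y) :=
  Nat.even_xor.2 (Nat.even_add.1 h)

theorem CVT_eq_zero_of_add_eq_two_pow_sub_two {X Y k : ℕ} (hX : Even X) (hY : Even Y)
    (h : X + Y = 2 ^ k - 2) : CVT X Y = 0 := by
  obtain ⟨x, rfl⟩ := hX.two_dvd
  obtain ⟨y, rfl⟩ := hY.two_dvd
  have hxy : x + y = 2 ^ (k - 1) - 1 := by rw [Nat.two_pow_sub_two_eq_two_mul] at h; omega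
  rw [CVT, Nat.two_mul_and_two_mul, Nat.and_eq_zero_of_add_eq_two_pow_sub_one hxy]

theorem height_le_two_steps_general (k X Y : ℕ) (hsum : X + Y = 2 ^ k - 2) :
    (fun p : ℕ × ℕ => (CVT p.1 p.2, XOR p.1 p.2))^[2] (X, Y) = (0, 2 ^ k - 2) := by
  show (CVT (CVT X Y) (XOR X Y), XOR (CVT X Y) (XOR X Y)) = (0, 2 ^ k - 2)
  have hsum₁ : CVT X Y + XOR X Y = 2 ^ k - 2 := (CVT_add_XOR X Y).trans hsum
  have hXOR : Even (XOR X Y) :=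
    even_XOR (by rw [hsum, Nat.two_pow_sub_two_eq_two_mul]; exact even_two_mul _)
  have hCVT₂ : CVT (CVT X Y) (XOR X Y) = 0 :=
    CVT_eq_zero_of_add_eq_two_pow_sub_two (even_CVT X Y) hXOR hsum₁
  have hsum₂ := CVT_add_XOR (CVT X Y) (XOR X Y)
  ext <;> simp only <;> omega

theorem height_le_two_steps (k X Y : ℕ) (hk : 2 ≤ k) (hsum : X + Y = 2 ^ k - 2) :
    (fun p : ℕ × ℕ => (CVT p.1 p.2, XOR p.1 p.2))^[2] (X, Y) = (0, 2 ^ k - 2) :=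
  height_le_two_steps_general k X Y hsum
end
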